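/- arXiv:1506.04774 — 2 statements merged into one kernel-verified Lean document; each statement's English description precedes it below -/
import Mathlib

section
/- Grouping of sizes (Lemma 6.9 of Eskin–Masur–Rafi): Fix μ > 1 and η₀ > 1, and define scales recursively by η_{i+1} = μ·η_i³. Then for any finite set {d₁, …, d_m} of positive real numbers, there exists an index i with 0 ≤ i ≤ m such that η_i is an admissible scale for this set; that is, there is a partition E of {d₁, …, d_m} such that any two elements d, d' in the same block satisfy d/d' ≤ η_i (whenever d ≥ d'), and any two elements d, d' in different blocks with d ≥ d' satisfy d/d' ≥ μ·η_i. -/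
/-!
Sort the sizes and call the ratios `ρ j` of consecutive ones the gaps. A scale `t` is admissible
as soon as no gap lies in `(t, μ t)` and the gaps at most `t` multiply to at most `t`
(`IsGoodScale`): cutting at the gaps above `t` gives blocks of spread at most `t`, separated by
ratios at least `μ t`.

If `η K` is not good, either the small gaps multiply to more than `η K`, or a gap in
`(η K, μ η K)` becomes small at the next scale, and `η (K + 1) = μ (η K)³` absorbs it together
with a product at most `η K`. So while all scales up to `K` fail, at least `K` gaps are at most
`η K` and they multiply to at most `η k`, `k` being their number (`SmallGapsBound`). There are
only `m - 1` gaps, so some `η i` with `i ≤ m - 1` is good.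
-/

open Finset

structure IsScaleSequence (μ : ℝ) (η : ℕ → ℝ) : Prop where
  one_lt_factor : 1 < μ
  one_lt_zero : 1 < η 0
  succ : ∀ i, η (i + 1) = μ * η i ^ 3

namespace IsScaleSequence

variable {μ : ℝ} {η : ℕ → ℝ}

lemma one_lt (h : IsScaleSequence μ η) (i : ℕ) : 1 < η i := by
  induction i with
  | zero => exact h.one_lt_zero
  | succ i ih =>
    rw [h.succ]
    exact one_lt_mul_of_lt_of_le h.one_lt_factor (one_lt_pow₀ ih three_ne_zero).le

lemma pos (h : IsScaleSequence μ η) (i : ℕ) : 0 < η i :=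
  zero_lt_one.trans (h.one_lt i)

lemma factor_pos (h : IsScaleSequence μ η) : 0 < μ :=
  zero_lt_one.trans h.one_lt_factor

lemma mul_sq_le_succ (h : IsScaleSequence μ η) (i : ℕ) : μ * η i ^ 2 ≤ η (i + 1) := by
  rw [h.succ]
  gcongr
  · exact h.factor_pos.le
  · exact (h.one_lt i).le
  · norm_num

lemma sq_le_succ (h : IsScaleSequence μ η) (i : ℕ) : η i ^ 2 ≤ η (i + 1) :=
  (le_mul_of_one_le_left (sq_nonneg _) h.one_lt_factor.le).trans (h.mul_sq_le_succ i)

lemma mul_le_succ (h : IsScaleSequence μ η) (i : ℕ) : μ * η i ≤ η (i + 1) := by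
  refine le_trans ?_ (h.mul_sq_le_succ i)
  gcongr
  · exact h.factor_pos.le
  · exact le_self_pow₀ (h.one_lt i).le two_ne_zero

lemma monotone (h : IsScaleSequence μ η) : Monotone η :=
  monotone_nat_of_le_succ fun i =>
    (le_self_pow₀ (h.one_lt i).le two_ne_zero).trans (h.sq_le_succ i)

lemma pow_succ_le (h : IsScaleSequence μ η) (i j : ℕ) : η i ^ (j + 1) ≤ η (i + j) := by
  induction j with
  | zero => simp
  | succ j ih =>
    calc η i ^ (j + 1 + 1) = η i ^ (j + 1) * η i := pow_succ _ _
      _ ≤ η (i + j) * η (i + j) :=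
        mul_le_mul ih (h.monotone (Nat.le_add_right i j)) (h.pos i).le (h.pos _).le
      _ = η (i + j) ^ 2 := (sq _).symm
      _ ≤ η (i + (j + 1)) := h.sq_le_succ _

end IsScaleSequence

lemma Finset.prod_le_pow_card_of_nonneg {ι R : Type*} [CommMonoidWithZero R] [PartialOrder R]
    [ZeroLEOneClass R] [PosMulMono R] {s : Finset ι} {f : ι → R} {b : R}
    (h : ∀ j ∈ s, 0 ≤ f j ∧ f j ≤ b) : ∏ j ∈ s, f j ≤ b ^ #s :=
  (prod_le_prod (fun j hj => (h j hj).1) fun j hj => (h j hj).2).trans_eq (prod_const b)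

section Gaps

variable {ι : Type*}

noncomputable def smallGaps (s : Finset ι) (ρ : ι → ℝ) (t : ℝ) : Finset ι := {j ∈ s | ρ j ≤ t}

lemma smallGaps_mono {s : Finset ι} {ρ : ι → ℝ} {t t' : ℝ} (htt' : t ≤ t') :
    smallGaps s ρ t ⊆ smallGaps s ρ t' :=
  monotone_filter_right s fun _ _ hj => hj.trans htt'

def IsGoodScale (μ t : ℝ) (s : Finset ι) (ρ : ι → ℝ) : Prop :=
  (∀ j ∈ s, t < ρ j → μ * t ≤ ρ j) ∧ ∏ j ∈ smallGaps s ρ t, ρ j ≤ t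

def SmallGapsBound (η : ℕ → ℝ) (s : Finset ι) (ρ : ι → ℝ) (K : ℕ) : Prop :=
  K ≤ #(smallGaps s ρ (η K)) ∧ ∏ j ∈ smallGaps s ρ (η K), ρ j ≤ η #(smallGaps s ρ (η K))

end Gaps

namespace IsScaleSequence

variable {μ : ℝ} {η : ℕ → ℝ} {ι : Type*} {s : Finset ι} {ρ : ι → ℝ}

lemma prod_mul_le_of_mem (h : IsScaleSequence μ η) {K : ℕ} {N : Finset ι}
    (hN : ∀ j ∈ N, 0 ≤ ρ j ∧ ρ j ≤ η (K + 1)) {w : ι} (hwN : w ∈ N) (hwμ : ρ w ≤ μ * η K)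
    {P : ℝ} (hP0 : 0 ≤ P) (hP : P ≤ η K) : (∏ j ∈ N, ρ j) * P ≤ η (K + #N) := by
  classical
  obtain ⟨c, hc⟩ : ∃ c, #N = c + 1 := ⟨#N - 1, by have := card_pos.2 ⟨w, hwN⟩; omega⟩
  have hrest : ∏ j ∈ N.erase w, ρ j ≤ η (K + 1) ^ c := by
    have hcw : #(N.erase w) = c := by rw [card_erase_of_mem hwN, hc, Nat.add_sub_cancel]
    exact hcw ▸ prod_le_pow_card_of_nonneg fun j hj => hN j (mem_of_mem_erase hj)
  have hrest0 : 0 ≤ ∏ j ∈ N.erase w, ρ j :=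
    prod_nonneg fun j hj => (hN j (mem_of_mem_erase hj)).1
  have hμK : 0 ≤ μ * η K := (mul_pos h.factor_pos (h.pos K)).le
  calc (∏ j ∈ N, ρ j) * P = ρ w * (∏ j ∈ N.erase w, ρ j) * P := by rw [mul_prod_erase N ρ hwN]
    _ ≤ μ * η K * η (K + 1) ^ c * η K :=
        mul_le_mul (mul_le_mul hwμ hrest hrest0 hμK) hP hP0
          (mul_nonneg hμK (pow_nonneg (h.pos _).le _))
    _ = μ * η K ^ 2 * η (K + 1) ^ c := by ring
    _ ≤ η (K + 1) * η (K + 1) ^ c := by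
        gcongr
        · exact pow_nonneg (h.pos _).le _
        · exact h.mul_sq_le_succ K
    _ = η (K + 1) ^ (c + 1) := (pow_succ' _ _).symm
    _ ≤ η (K + 1 + c) := h.pow_succ_le _ _
    _ = η (K + #N) := by rw [hc, add_assoc, add_comm 1 c]

lemma smallGapsBound_zero (h : IsScaleSequence μ η) (hρ : ∀ j ∈ s, 0 ≤ ρ j) :
    SmallGapsBound η s ρ 0 := by
  refine ⟨Nat.zero_le _, ?_⟩
  set k := #(smallGaps s ρ (η 0))
  calc ∏ j ∈ smallGaps s ρ (η 0), ρ j ≤ η 0 ^ k :=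
        prod_le_pow_card_of_nonneg fun j hj => ⟨hρ j (mem_filter.1 hj).1, (mem_filter.1 hj).2⟩
    _ ≤ η 0 ^ (k + 1) := pow_le_pow_right₀ (h.one_lt 0).le k.le_succ
    _ ≤ η (0 + k) := h.pow_succ_le 0 k
    _ = η k := by rw [zero_add]

lemma smallGapsBound_succ (h : IsScaleSequence μ η) (hρ : ∀ j ∈ s, 0 ≤ ρ j) {K : ℕ}
    (hK : SmallGapsBound η s ρ K) (hbad : ¬ IsGoodScale μ (η K) s ρ) :
    SmallGapsBound η s ρ (K + 1) := by
  classical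
  obtain ⟨hKk, hP⟩ := hK
  have hsub := smallGaps_mono (s := s) (ρ := ρ) (h.monotone (Nat.le_add_right K 1))
  set k := #(smallGaps s ρ (η K))
  set P := ∏ j ∈ smallGaps s ρ (η K), ρ j
  set N := smallGaps s ρ (η (K + 1)) \ smallGaps s ρ (η K)
  have hN : ∀ j ∈ N, 0 ≤ ρ j ∧ ρ j ≤ η (K + 1) := fun j hj => by
    simp only [N, smallGaps, mem_sdiff, mem_filter] at hj
    exact ⟨hρ j hj.1.1, hj.1.2⟩
  have hP0 : 0 ≤ P := prod_nonneg fun j hj => hρ j (mem_filter.1 hj).1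
  have hcard : #(smallGaps s ρ (η (K + 1))) = k + #N := by
    rw [← card_sdiff_add_card_eq_card hsub, add_comm]
  rw [SmallGapsBound, hcard, ← prod_sdiff hsub]
  rcases hKk.lt_or_eq with hlt | hKk
  · refine ⟨by omega, ?_⟩
    have hNk : ∀ j ∈ N, 0 ≤ ρ j ∧ ρ j ≤ η k := fun j hj =>
      ⟨(hN j hj).1, (hN j hj).2.trans (h.monotone hlt)⟩
    calc (∏ j ∈ N, ρ j) * P ≤ η k ^ #N * η k :=
          mul_le_mul (prod_le_pow_card_of_nonneg hNk) hP hP0 (pow_nonneg (h.pos k).le _)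
      _ = η k ^ (#N + 1) := (pow_succ _ _).symm
      _ ≤ η (k + #N) := h.pow_succ_le k #N
  · rw [← hKk] at hP ⊢
    -- the small gaps multiply to at most `η K`, so some gap lies in `(η K, μ η K)`
    obtain ⟨w, hws, hwK, hwμ⟩ : ∃ w ∈ s, η K < ρ w ∧ ρ w < μ * η K := by
      by_contra! hno
      exact hbad ⟨hno, hP⟩
    have hwN : w ∈ N := by
      simp only [N, smallGaps, mem_sdiff, mem_filter]
      exact ⟨⟨hws, hwμ.le.trans (h.mul_le_succ K)⟩, fun hw => hwK.not_ge hw.2⟩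
    exact ⟨Nat.add_le_add_left (card_pos.2 ⟨w, hwN⟩) K, h.prod_mul_le_of_mem hN hwN hwμ.le hP0 hP⟩

theorem exists_isGoodScale (h : IsScaleSequence μ η) (hρ : ∀ j ∈ s, 0 ≤ ρ j) :
    ∃ i ≤ #s, IsGoodScale μ (η i) s ρ := by
  by_contra! hbad
  have hbound : ∀ K ≤ #s + 1, SmallGapsBound η s ρ K := by
    intro K hK
    induction K with
    | zero => exact h.smallGapsBound_zero hρ
    | succ K ih => exact h.smallGapsBound_succ hρ (ih (by omega)) (hbad K (by omega))
  exact ((hbound _ le_rfl).1.trans (card_filter_le _ _)).not_gt (Nat.lt_succ_self #s)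

end IsScaleSequence

def IsAdmissibleScale (μ t : ℝ) (D : Finset ℝ) : Prop :=
  ∃ blk : ℝ → ℕ, ∀ d ∈ D, ∀ d' ∈ D, d' ≤ d →
    (blk d = blk d' → d ≤ t * d') ∧ (blk d ≠ blk d' → μ * t * d' ≤ d)

lemma Finset.exists_strictMonoOn_image_range {α : Type*} [LinearOrder α] [Inhabited α]
    (D : Finset α) : ∃ x : ℕ → α, StrictMonoOn x (Set.Iio #D) ∧ (range #D).image x = D := by
  let f := D.orderEmbOfFin rfl
  refine ⟨fun j => if hj : j < #D then f ⟨j, hj⟩ else default, ?_, ?_⟩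
  · intro a ha b hb hab
    simp only [Set.mem_Iio] at ha hb
    simpa [ha, hb] using f.strictMono (show (⟨a, ha⟩ : Fin #D) < ⟨b, hb⟩ from hab)
  · ext d
    simp only [mem_image, mem_range]
    constructor
    · rintro ⟨a, ha, rfl⟩
      simp only [ha, dite_true]
      exact D.orderEmbOfFin_mem rfl ⟨a, ha⟩
    · intro hd
      obtain ⟨i, rfl⟩ : d ∈ Set.range f := by rwa [D.range_orderEmbOfFin rfl]
      exact ⟨i, i.2, by simp [i.2]⟩

lemma eq_mul_prod_Ico_div {G₀ : Type*} [CommGroupWithZero G₀] {x : ℕ → G₀} {p q : ℕ}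
    (hpq : p ≤ q) (hx : ∀ j ∈ Ico p q, x j ≠ 0) :
    x q = x p * ∏ j ∈ Ico p q, x (j + 1) / x j := by
  induction q, hpq using Nat.le_induction with
  | base => simp
  | succ q hpq ih =>
    rw [prod_Ico_succ_top hpq, ← mul_assoc,
      ← ih fun j hj => hx j (Ico_subset_Ico_right q.le_succ hj),
      mul_div_cancel₀ _ (hx q (by simp [hpq]))]

section SortedSizes

variable {μ t : ℝ} {x : ℕ → ℝ} {m : ℕ}

lemma one_le_succ_div_of_strictMonoOn (hx : StrictMonoOn x (Set.Iio m))
    (hpos : ∀ j < m, 0 < x j) {j : ℕ} (hj : j + 1 < m) : 1 ≤ x (j + 1) / x j := by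
  rw [one_le_div (hpos j (by omega))]
  exact (hx (Set.mem_Iio.2 (by omega)) (Set.mem_Iio.2 hj) j.lt_succ_self).le

lemma IsGoodScale.le_mul_of_forall_le (hx : StrictMonoOn x (Set.Iio m))
    (hpos : ∀ j < m, 0 < x j) (hgood : IsGoodScale μ t (range (m - 1)) fun j => x (j + 1) / x j)
    {p q : ℕ} (hpq : p ≤ q) (hq : q < m) (hsmall : ∀ j ∈ Ico p q, x (j + 1) / x j ≤ t) :
    x q ≤ t * x p := by
  have hρ : ∀ j ∈ range (m - 1), 1 ≤ x (j + 1) / x j := fun j hj =>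
    one_le_succ_div_of_strictMonoOn hx hpos (by rw [mem_range] at hj; omega)
  have hsub : Ico p q ⊆ smallGaps (range (m - 1)) (fun j => x (j + 1) / x j) t := fun j hj => by
    rw [smallGaps, mem_filter, mem_range]
    exact ⟨by rw [mem_Ico] at hj; omega, hsmall j hj⟩
  have hp : 0 ≤ x p := (hpos p (by omega)).le
  calc x q = x p * ∏ j ∈ Ico p q, x (j + 1) / x j :=
        eq_mul_prod_Ico_div hpq fun j hj => (hpos j (by rw [mem_Ico] at hj; omega)).ne'
    _ ≤ x p * ∏ j ∈ smallGaps (range (m - 1)) (fun j => x (j + 1) / x j) t, x (j + 1) / x j :=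
        mul_le_mul_of_nonneg_left (prod_le_prod_of_subset_of_one_le hsub
          (fun j hj => zero_le_one.trans (hρ j (mem_filter.1 (hsub hj)).1))
          fun j hj _ => hρ j (mem_filter.1 hj).1) hp
    _ ≤ x p * t := mul_le_mul_of_nonneg_left hgood.2 hp
    _ = t * x p := mul_comm _ _

lemma IsGoodScale.mul_le_of_lt (hx : StrictMonoOn x (Set.Iio m))
    (hpos : ∀ j < m, 0 < x j) (hgood : IsGoodScale μ t (range (m - 1)) fun j => x (j + 1) / x j)
    {p q j : ℕ} (hpj : p ≤ j) (hjq : j < q) (hq : q < m) (htj : t < x (j + 1) / x j) :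
    μ * t * x p ≤ x q :=
  calc μ * t * x p ≤ x (j + 1) / x j * x j :=
        mul_le_mul (hgood.1 j (mem_range.2 (by omega)) htj)
          (hx.monotoneOn (Set.mem_Iio.2 (by omega)) (Set.mem_Iio.2 (by omega)) hpj)
          (hpos p (by omega)).le
          (zero_le_one.trans (one_le_succ_div_of_strictMonoOn hx hpos (by omega)))
    _ = x (j + 1) := div_mul_cancel₀ _ (hpos j (by omega)).ne'
    _ ≤ x q := hx.monotoneOn (Set.mem_Iio.2 (by omega)) (Set.mem_Iio.2 hq) (by omega)

lemma IsGoodScale.isAdmissibleScale_image (hx : StrictMonoOn x (Set.Iio m))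
    (hpos : ∀ j < m, 0 < x j) (hgood : IsGoodScale μ t (range (m - 1)) fun j => x (j + 1) / x j) :
    IsAdmissibleScale μ t ((range m).image x) := by
  set big : ℕ → Finset ℕ := fun r => {j ∈ range (m - 1) | t < x (j + 1) / x j ∧ j < r}
  have hblk : ∀ r < m,
      {j ∈ range (m - 1) | t < x (j + 1) / x j ∧ x (j + 1) ≤ x r} = big r := by
    intro r hr
    refine filter_congr fun j hj => and_congr_right fun _ => ?_
    rw [mem_range] at hj
    exact (hx.le_iff_le (Set.mem_Iio.2 (by omega)) (Set.mem_Iio.2 hr)).trans Nat.succ_le_iff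
  refine ⟨fun d => #{j ∈ range (m - 1) | t < x (j + 1) / x j ∧ x (j + 1) ≤ d}, ?_⟩
  simp only [mem_image, mem_range, forall_exists_index, and_imp]
  rintro _ q hq rfl _ p hp rfl hpq
  replace hpq : p ≤ q := (hx.le_iff_le hp hq).1 hpq
  rw [hblk q hq, hblk p hp]
  by_cases hsmall : ∀ j ∈ Ico p q, x (j + 1) / x j ≤ t
  · have hbig : big q = big p := by
      refine filter_congr fun j _ => and_congr_right fun htj => ?_
      have hj : j < p ∨ q ≤ j := by
        by_contra! hj
        exact (hsmall j (mem_Ico.2 hj)).not_gt htj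
      omega
    exact ⟨fun _ => hgood.le_mul_of_forall_le hx hpos hpq hq hsmall,
      fun hne => absurd (congrArg card hbig) hne⟩
  · push Not at hsmall
    obtain ⟨j, hj, htj⟩ := hsmall
    rw [mem_Ico] at hj
    have hlt : #(big p) < #(big q) := by
      refine card_lt_card ⟨monotone_filter_right _ fun i _ hi => ⟨hi.1, by omega⟩, fun h => ?_⟩
      have hjq : j ∈ big q := mem_filter.2 ⟨mem_range.2 (by omega), htj, hj.2⟩
      exact (mem_filter.1 (h hjq)).2.2.not_ge hj.1
    exact ⟨fun heq => absurd heq hlt.ne', fun _ => hgood.mul_le_of_lt hx hpos hj.1 hj.2 hq htj⟩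

end SortedSizes

/-- Grouping of sizes (Lemma 6.9 of Eskin–Masur–Rafi): with scales defined by
`η₀` given and `η_{i+1} = μ·η_i³`, any finite set of positive reals admits an
admissible scale `η_i` with `i ≤ m`. The partition is encoded by a block
assignment `blk`. -/
theorem grouping_of_sizes (μ η₀ : ℝ) (hμ : 1 < μ) (hη₀ : 1 < η₀)
    (η : ℕ → ℝ) (h0 : η 0 = η₀) (hrec : ∀ i : ℕ, η (i + 1) = μ * (η i) ^ 3)
    (D : Finset ℝ) (hpos : ∀ d ∈ D, 0 < d) :
    ∃ i : ℕ, i ≤ D.card ∧ ∃ blk : ℝ → ℕ,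
      ∀ d ∈ D, ∀ d' ∈ D, d' ≤ d →
        (blk d = blk d' → d ≤ η i * d') ∧
        (blk d ≠ blk d' → μ * η i * d' ≤ d) := by
  have hη : IsScaleSequence μ η := ⟨hμ, h0 ▸ hη₀, hrec⟩
  obtain ⟨x, hx, hD⟩ := D.exists_strictMonoOn_image_range
  have hxpos : ∀ j < #D, 0 < x j := fun j hj => hpos _ (hD ▸ mem_image_of_mem x (mem_range.2 hj))
  obtain ⟨i, hi, hgood⟩ := hη.exists_isGoodScale (s := range (#D - 1))
    (ρ := fun j => x (j + 1) / x j) fun j hj => by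
      rw [mem_range] at hj
      exact div_nonneg (hxpos _ (by omega)).le (hxpos _ (by omega)).le
  refine ⟨i, hi.trans (by simp), ?_⟩
  exact hD ▸ hgood.isAdmissibleScale_image hx hxpos
end

section
/- Claim from Proposition 4.2 (factor maps are quasi-isometric embeddings): Let m ≥ 1 and let f̄ : ∏_{i=1}^m H_i → ∏_{i=1}^m H_i be a (K, C)-quasi-isometric embedding of a product of metric spaces with the sup metric (restricted to a ball B). Fix ε ≤ 1/(2K) and D₀ ≥ 0, and suppose there is a permutation σ of {1,…,m} such that whenever x, y ∈ B differ only in the i-th factor, the points f̄(x) and f̄(y) differ in each factor other than the σ(i)-th by at most (ε·d(x,y) + D₀)/m. Define φ_i(u) to be the σ(i)-th coordinate of f̄ applied to the point agreeing with a fixed basepoint z in all factors except the i-th, where it equals u. Then each φ_i is a (2K, C + D₀)-quasi-isometric embedding. -/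
/-- Claim from Proposition 4.2 of Eskin–Masur–Rafi: if a `(K, C)`-quasi-isometric
embedding `f` of a product of metric spaces (sup metric) coarsely factors in the
sense that moving only the `i`-th coordinate moves all coordinates other than the
`σ(i)`-th by at most `(ε·d + D₀)/m`, then each induced coordinate map
`φ_i(u) = f(update z i u)_{σ(i)}` is a `(2K, C + D₀)`-quasi-isometric embedding. -/
theorem factor_maps_are_qie {m : ℕ} (hm : 1 ≤ m)
    (H : Fin m → Type*) [∀ i, MetricSpace (H i)]
    (f : (∀ i, H i) → (∀ i, H i)) (B : Set (∀ i, H i))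
    (K C ε D₀ : ℝ) (hK : 1 ≤ K) (hC : 0 ≤ C) (hD₀ : 0 ≤ D₀)
    (hε0 : 0 ≤ ε) (hε : ε ≤ 1 / (2 * K))
    (hQI : ∀ x ∈ B, ∀ y ∈ B,
      (1 / K) * dist x y - C ≤ dist (f x) (f y) ∧
      dist (f x) (f y) ≤ K * dist x y + C)
    (σ : Equiv.Perm (Fin m))
    (hfactor : ∀ x ∈ B, ∀ y ∈ B, ∀ i : Fin m,
      (∀ j : Fin m, j ≠ i → x j = y j) →
      ∀ j : Fin m, j ≠ σ i → dist (f x j) (f y j) ≤ (ε * dist x y + D₀) / m)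
    (z : ∀ i, H i) (hz : z ∈ B)
    (hB : ∀ (i : Fin m) (u : H i), Function.update z i u ∈ B) :
    ∀ (i : Fin m) (u v : H i),
      (1 / (2 * K)) * dist u v - (C + D₀) ≤
        dist (f (Function.update z i u) (σ i)) (f (Function.update z i v) (σ i)) ∧
      dist (f (Function.update z i u) (σ i)) (f (Function.update z i v) (σ i)) ≤
        2 * K * dist u v + (C + D₀) := by
  intro i u v
  set x := Function.update z i u with hx
  set y := Function.update z i v with hy
  have hxB := hB i u
  have hyB := hB i v
  have hK0 : (0:ℝ) < K := lt_of_lt_of_le one_pos hK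
  have hd : dist x y = dist u v := by
    apply le_antisymm
    · rw [dist_pi_le_iff dist_nonneg]
      intro j
      rcases eq_or_ne j i with rfl | hj
      · simp [hx, hy]
      · simp [hx, hy, Function.update_of_ne hj, dist_nonneg]
    · simpa [hx, hy] using dist_le_pi_dist x y i
  obtain ⟨hlow, hup⟩ := hQI x hxB y hyB
  have hA0 : (0:ℝ) ≤ dist (f x (σ i)) (f y (σ i)) := dist_nonneg
  have hAle : dist (f x (σ i)) (f y (σ i)) ≤ dist (f x) (f y) := dist_le_pi_dist _ _ _
  have hd0 : (0:ℝ) ≤ dist u v := dist_nonneg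
  constructor
  · have hsup : dist (f x) (f y) ≤
        max (dist (f x (σ i)) (f y (σ i))) (ε * dist x y + D₀) := by
      rw [dist_pi_le_iff (le_max_of_le_left dist_nonneg)]
      intro j
      rcases eq_or_ne j (σ i) with rfl | hj
      · exact le_max_left _ _
      · refine le_trans (hfactor x hxB y hyB i ?_ j hj)
          (le_trans ?_ (le_max_right _ _))
        · intro k hk; simp [hx, hy, Function.update_of_ne hk]
        · apply div_le_self
          · have : (0:ℝ) ≤ ε * dist x y := mul_nonneg hε0 dist_nonneg
            linarith
          · exact_mod_cast hm
    have h1 : (1 / K) * dist x y - C ≤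
        max (dist (f x (σ i)) (f y (σ i))) (ε * dist x y + D₀) :=
      le_trans hlow hsup
    rw [hd] at h1
    have hkk : 1 / K = 2 * (1 / (2 * K)) := by field_simp
    have hεd : ε * dist u v ≤ (1 / (2 * K)) * dist u v :=
      mul_le_mul_of_nonneg_right hε hd0
    rcases le_max_iff.mp h1 with h | h
    · have hhalf : (1 / (2 * K)) * dist u v ≤ (1 / K) * dist u v := by
        nlinarith [mul_nonneg (le_of_lt hK0) hd0]
      linarith
    · have : (1 / (2 * K)) * dist u v ≤ C + D₀ := by linarith [hkk ▸ h]
      linarith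
  · rw [hd] at hup
    have : K * dist u v ≤ 2 * K * dist u v := by nlinarith
    calc dist (f x (σ i)) (f y (σ i)) ≤ dist (f x) (f y) := hAle
      _ ≤ K * dist u v + C := hup
      _ ≤ 2 * K * dist u v + (C + D₀) := by linarith
end
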